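/- Let G be a graph, κ an infinite cardinal, (T, W) a well-founded tree-decomposition of G with all bags of cardinality < κ, and let ≤' be a total well-ordering of V(T) extending the tree order. Define m(x) as the ≤'-least node with x ∈ W(t), fix injections φ_t : W(t) → |W(t)| for each t, and well-order V(G) by x ≤ y iff m(x) <' m(y) or (m(x) = m(y) and φ_{m(x)}(x) ≤ φ_{m(y)}(y)). Then the function f : V(G) → κ defined by transfinite recursion f(x) = min(κ \ {f(z) : z < x and z ∈ W(m(x))}) is well-defined and injective on every bag W(t0). -/

import Mathlib

universe u

def TreeInf (T : Type u) [PartialOrder T] (inf : T → T → T) : Prop :=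
  ∀ t1 t2 : T, inf t1 t2 ≤ t1 ∧ inf t1 t2 ≤ t2 ∧ ∀ s : T, s ≤ t1 → s ≤ t2 → s ≤ inf t1 t2

def WFTree (T : Type u) [PartialOrder T] (inf : T → T → T) : Prop :=
  Nonempty T ∧ TreeInf T inf ∧
    ∀ t : T, IsWellOrder {t' : T // t' < t} (fun a b => a.1 < b.1)

/-- `T[t1,t2] = {t : t ≥ inf{t1,t2} and (t ≤ t1 or t ≤ t2)}`. -/
def treeInterval {T : Type u} [PartialOrder T] (inf : T → T → T) (t1 t2 : T) : Set T :=
  {t | inf t1 t2 ≤ t ∧ (t ≤ t1 ∨ t ≤ t2)}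

/-- A well-founded tree-decomposition of the graph `G`, with bags `W`. -/
def WFTreeDecomp {V T : Type u} [PartialOrder T] (inf : T → T → T)
    (G : SimpleGraph V) (W : T → Set V) : Prop :=
  WFTree T inf ∧
  -- (W1): every vertex lies in some bag, every edge lies in some single bag
  (∀ v : V, ∃ t : T, v ∈ W t) ∧
  (∀ u v : V, G.Adj u v → ∃ t : T, u ∈ W t ∧ v ∈ W t) ∧
  -- (W2)
  (∀ t1 t2 t' : T, t' ∈ treeInterval inf t1 t2 → W t1 ∩ W t2 ⊆ W t') ∧
  -- (W3)
  (∀ C : Set T, C.Nonempty → IsChain (· ≤ ·) C → ∀ c : T, IsLUB C c →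
    (⋂ t ∈ C, W t) ⊆ W c)

/-!
The colouring is greedy along a well-order in which a vertex `x` only has to avoid the colours
of earlier vertices of its home bag `W (m x)`; that bag has fewer than `κ` elements, so a colour
below `κ` is always free. For injectivity on a bag `W t₀`, let `x` come before `y` in it. By (W2)
and the minimality of `m`, both `m x` and `m y` lie below `t₀`, so they are comparable in the
tree, and since `r` extends the tree order, `m x ≤ m y`. Then `m y` lies on the path from `t₀`
to `m x`, so (W2) puts `x` into `W (m y)`, and `y` was coloured avoiding the colour of `x`.
-/

open Cardinal Ordinal Set

theorem exists_lt_ord_notMem_image {V : Type u} {κ : Cardinal.{u}} (f : V → Ordinal.{u})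
    {S : Set V} (hS : #S < κ) : ∃ γ < κ.ord, γ ∉ f '' S := by
  have hcompl : (range (S.domRestrict f))ᶜ.Nonempty :=
    nonempty_compl.2 fun h => not_surjective_of_ordinal _ (range_eq_univ.1 h)
  refine ⟨sInf (range (S.domRestrict f))ᶜ,
    lt_ord.2 ((card_sInf_range_compl_le _).trans_lt hS), ?_⟩
  rw [← range_domRestrict]
  exact csInf_mem hcompl

theorem exists_isLeast_greedy_coloring {V : Type u} {prec : V → V → Prop}
    (hwf : WellFounded prec) (N : V → Set V) {κ : Cardinal.{u}} (hN : ∀ x, #(N x) < κ) :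
    ∃ f : V → Ordinal.{u}, ∀ x, IsLeast
      {γ | γ < κ.ord ∧ ∀ z, prec z x → z ∈ N x → f z ≠ γ} (f x) := by
  let f : V → Ordinal.{u} := hwf.fix fun x g =>
    sInf {γ | γ < κ.ord ∧ ∀ z (h : prec z x), z ∈ N x → g z h ≠ γ}
  refine ⟨f, fun x => ?_⟩
  rw [show f x = _ from hwf.fix_eq _ x]
  obtain ⟨γ, hγκ, hγ⟩ := exists_lt_ord_notMem_image f (hN x)
  exact ⟨csInf_mem ⟨γ, hγκ, fun z _ hz hzγ => hγ ⟨z, hz, hzγ⟩⟩, fun _ hb => csInf_le' hb⟩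

section TreeDecomposition

variable {V T : Type*} [PartialOrder T]

theorem le_or_le_of_le_of_le
    (hwo : ∀ t : T, IsWellOrder {t' : T // t' < t} (fun a b => a.1 < b.1))
    {a b t : T} (ha : a ≤ t) (hb : b ≤ t) : a ≤ b ∨ b ≤ a := by
  rcases ha.lt_or_eq with ha | rfl
  · rcases hb.lt_or_eq with hb | rfl
    · rcases @trichotomous _ _ (hwo t).toTrichotomous ⟨a, ha⟩ ⟨b, hb⟩ with h | h | h
      · exact Or.inl h.le
      · exact Or.inl (congrArg Subtype.val h).le
      · exact Or.inr h.le
    · exact Or.inl ha.le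
  · exact Or.inr hb

theorem le_of_mem_of_forall_not_rel {inf : T → T → T} {W : T → Set V} {r : T → T → Prop}
    (hinf : TreeInf T inf)
    (hW2 : ∀ t1 t2 t' : T, t' ∈ treeInterval inf t1 t2 → W t1 ∩ W t2 ⊆ W t')
    (hext : ∀ s t : T, s < t → r s t) {x : V} {s t : T} (hs : x ∈ W s)
    (hmin : ∀ t', x ∈ W t' → ¬ r t' s) (ht : x ∈ W t) : s ≤ t := by
  have hx : x ∈ W (inf t s) := hW2 t s _ ⟨le_rfl, Or.inl (hinf t s).1⟩ ⟨ht, hs⟩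
  have hinf_eq : inf t s = s :=
    (hinf t s).2.1.lt_or_eq.resolve_left fun h => hmin _ hx (hext _ _ h)
  exact hinf_eq ▸ (hinf t s).1

theorem mem_bag_home_of_not_rel {inf : T → T → T} {W : T → Set V} {r : T → T → Prop} {m : V → T}
    (hinf : TreeInf T inf)
    (hwo : ∀ t : T, IsWellOrder {t' : T // t' < t} (fun a b => a.1 < b.1))
    (hW2 : ∀ t1 t2 t' : T, t' ∈ treeInterval inf t1 t2 → W t1 ∩ W t2 ⊆ W t')
    (hext : ∀ s t : T, s < t → r s t) (hm : ∀ x : V, x ∈ W (m x))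
    (hmin : ∀ x : V, ∀ t : T, x ∈ W t → ¬ r t (m x))
    {t₀ : T} {x y : V} (hx : x ∈ W t₀) (hy : y ∈ W t₀) (hyx : ¬ r (m y) (m x)) :
    x ∈ W (m y) := by
  have hmx : m x ≤ t₀ := le_of_mem_of_forall_not_rel hinf hW2 hext (hm x) (hmin x) hx
  have hmy : m y ≤ t₀ := le_of_mem_of_forall_not_rel hinf hW2 hext (hm y) (hmin y) hy
  have hxy : m x ≤ m y := by
    rcases le_or_le_of_le_of_le hwo hmx hmy with h | h
    · exact h
    · rcases h.lt_or_eq with h | h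
      · exact absurd (hext _ _ h) hyx
      · exact h.ge
  exact hW2 t₀ (m x) (m y) ⟨(hinf t₀ (m x)).2.1.trans hxy, Or.inl hmy⟩ ⟨hx, hm x⟩

end TreeDecomposition

section HomeLex

variable {V T : Type*} (r : T → T → Prop) (m : V → T) (φ : T → V → Ordinal)

def HomeLex (z x : V) : Prop :=
  r (m z) (m x) ∨ (m z = m x ∧ φ (m z) z < φ (m x) x)

variable {r m φ}

theorem wellFounded_homeLex (hr : WellFounded r) : WellFounded (HomeLex r m φ) := by
  refine Subrelation.wf ?_ (InvImage.wf (fun x => (m x, φ (m x) x)) (hr.prod_lex Ordinal.lt_wf))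
  rintro z x (h | ⟨h, hφ⟩)
  · exact Prod.Lex.left _ _ h
  · exact Prod.lex_def.mpr (Or.inr ⟨h, hφ⟩)

theorem HomeLex.not_rel_swap [Std.Asymm r] {x y : V} (h : HomeLex r m φ x y) :
    ¬ r (m y) (m x) := by
  rcases h with h | ⟨h, -⟩
  · exact asymm h
  · exact h ▸ irrefl _

theorem homeLex_or_homeLex_of_ne [Std.Trichotomous r] {W : T → Set V}
    (hm : ∀ x : V, x ∈ W (m x)) (hφinj : ∀ t : T, InjOn (φ t) (W t)) {x y : V} (hxy : x ≠ y) :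
    HomeLex r m φ x y ∨ HomeLex r m φ y x := by
  rcases trichotomous (r := r) (m x) (m y) with h | h | h
  · exact Or.inl (Or.inl h)
  · have hφ : φ (m x) x ≠ φ (m y) y := by
      rw [← h]
      exact fun hφ => hxy (hφinj _ (hm x) (h ▸ hm y) hφ)
    rcases hφ.lt_or_gt with hφ | hφ
    · exact Or.inl (Or.inr ⟨h, hφ⟩)
    · exact Or.inr (Or.inr ⟨h.symm, hφ⟩)
  · exact Or.inr (Or.inl h)

end HomeLex

theorem recursion_coloring_injective_on_bags_general {V T : Type u} [PartialOrder T]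
    (inf : T → T → T) (G : SimpleGraph V) (W : T → Set V)
    (hdec : WFTreeDecomp inf G W)
    (κ : Cardinal.{u})
    (hsmall : ∀ t : T, Cardinal.mk (W t) < κ)
    (r : T → T → Prop) (hr : IsWellOrder T r) (hext : ∀ s t : T, s < t → r s t)
    (m : V → T) (hm : ∀ x : V, x ∈ W (m x)) (hmin : ∀ x : V, ∀ t : T, x ∈ W t → ¬ r t (m x))
    (φ : T → V → Ordinal.{u})
    (hφinj : ∀ t : T, Set.InjOn (φ t) (W t)) :
    ∃ f : V → Ordinal.{u},
      (∀ x : V, IsLeast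
        {γ : Ordinal.{u} | γ < κ.ord ∧
          ∀ z : V, (r (m z) (m x) ∨ (m z = m x ∧ φ (m z) z < φ (m x) x)) →
            z ∈ W (m x) → f z ≠ γ}
        (f x)) ∧
      ∀ t0 : T, Set.InjOn f (W t0) := by
  obtain ⟨⟨-, hinf, hwo⟩, -, -, hW2, -⟩ := hdec
  obtain ⟨f, hf⟩ := exists_isLeast_greedy_coloring (wellFounded_homeLex (m := m) (φ := φ) hr.wf)
    (fun x => W (m x)) (fun x => hsmall (m x))
  refine ⟨f, hf, fun t0 x hx y hy hfxy => by_contra fun hxy => ?_⟩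
  have hmem {x y : V} (hx : x ∈ W t0) (hy : y ∈ W t0) (h : HomeLex r m φ x y) : x ∈ W (m y) :=
    mem_bag_home_of_not_rel hinf hwo hW2 hext hm hmin hx hy h.not_rel_swap
  rcases homeLex_or_homeLex_of_ne (r := r) hm hφinj hxy with h | h
  · exact (hf y).1.2 x h (hmem hx hy h) hfxy
  · exact (hf x).1.2 y h (hmem hy hx h) hfxy.symm

/-- The coloring recursion: given a well-founded tree-decomposition with bags of size
`< κ` (`κ` infinite), a total well-ordering `r` of `T` extending the tree order,
the map `m` sending each vertex to the `r`-least node whose bag contains it, and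
injections `φ t : W t → |W t|`, order the vertices lexicographically by
`(m x, φ (m x) x)`.  Then the function `f` defined by transfinite recursion
`f x = min (κ \ {f z : z < x and z ∈ W (m x)})` is well-defined and injective on
every bag. -/
theorem recursion_coloring_injective_on_bags {V T : Type u} [PartialOrder T]
    (inf : T → T → T) (G : SimpleGraph V) (W : T → Set V)
    (hdec : WFTreeDecomp inf G W)
    (κ : Cardinal.{u}) (hκ : Cardinal.aleph0 ≤ κ)
    (hsmall : ∀ t : T, Cardinal.mk (W t) < κ)
    (r : T → T → Prop) (hr : IsWellOrder T r) (hext : ∀ s t : T, s < t → r s t)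
    (m : V → T) (hm : ∀ x : V, x ∈ W (m x)) (hmin : ∀ x : V, ∀ t : T, x ∈ W t → ¬ r t (m x))
    (φ : T → V → Ordinal.{u})
    (hφinj : ∀ t : T, Set.InjOn (φ t) (W t))
    (hφlt : ∀ t : T, ∀ x ∈ W t, φ t x < (Cardinal.mk (W t)).ord) :
    ∃ f : V → Ordinal.{u},
      (∀ x : V, IsLeast
        {γ : Ordinal.{u} | γ < κ.ord ∧
          ∀ z : V, (r (m z) (m x) ∨ (m z = m x ∧ φ (m z) z < φ (m x) x)) →
            z ∈ W (m x) → f z ≠ γ}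
        (f x)) ∧
      ∀ t0 : T, Set.InjOn f (W t0) :=
  recursion_coloring_injective_on_bags_general inf G W hdec κ hsmall r hr hext m hm hmin φ hφinj
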